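/- (Sum relations (eq. 3), four fixed points.) Under the four-vertex hypotheses, for all β ∈ β̂₁, γ ∈ γ̂₁, δ ∈ δ̂₁, ε ∈ ε̂₁, η ∈ η̂₁, λ ∈ λ̂₁ one has: β+γ ∈ ε̂₁, β+δ ∈ η̂₁, β+η ∈ δ̂₁, β+ε ∈ γ̂₁, γ+δ ∈ λ̂₁, γ+ε ∈ β̂₁, γ+λ ∈ δ̂₁, δ+η ∈ β̂₁, δ+λ ∈ γ̂₁, ε+η ∈ λ̂₁, ε+λ ∈ η̂₁, and η+λ ∈ ε̂₁. -/

import Mathlib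

/-!
For `ρ ≠ 0` the fibres of `V → V ⧸ span {ρ}` are the pairs `{v, v + ρ}`, so a congruence mod `ρ`
between `A` and `B` balances `count v + count (v + ρ)` for every `v`; as `ρ + ρ = 0`, an element
in excess in `A` over `B` becomes, after adding `ρ`, an element in excess in `B` over `A`.
Let `x` label the edge `pq` and `y` the edge `pr`, neither cancelled against its opposite edge.
Then `x` is in excess at `p` over `r` and `y` at `p` over `q`, so `x + y` is in excess at both
`q` and `r` over `p`; since the edges opposite to `pq` and `pr` share no label, this puts `x + y`
on the edge `qr` and not on its opposite `ps`.
-/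

/-- Two multisets of vectors of `V` are *congruent mod `ρ`* if their images under the
quotient map `V → V ⧸ span {ρ}` are equal as multisets. -/
def CongMod {V : Type*} [AddCommGroup V] [Module (ZMod 2) V] (ρ : V)
    (A B : Multiset V) : Prop :=
  A.map ⇑(Submodule.span (ZMod 2) {ρ}).mkQ = B.map ⇑(Submodule.span (ZMod 2) {ρ}).mkQ

theorem Multiset.count_map_eq_count_add_count {α β : Type*} [DecidableEq α] [DecidableEq β]
    {f : α → β} {v w : α} (hvw : v ≠ w) (hf : ∀ a, f a = f v ↔ a = v ∨ a = w)
    (s : Multiset α) : (s.map f).count (f v) = s.count v + s.count w := by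
  rw [count_map, ← countP_eq_card_filter, countP_eq_countP_filter_add s _ (v = ·), countP_filter,
    countP_filter]
  congr 1 <;> refine countP_congr rfl fun a _ => ?_ <;> grind

theorem Submodule.mkQ_span_singleton_eq_iff {V : Type*} [AddCommGroup V] [Module (ZMod 2) V]
    {ρ a v : V} :
    (span (ZMod 2) {ρ}).mkQ a = (span (ZMod 2) {ρ}).mkQ v ↔ a = v ∨ a = v + ρ := by
  simp only [mkQ_apply, Quotient.eq, mem_span_singleton, eq_sub_iff_add_eq, eq_comm (a := a)]
  constructor
  · rintro ⟨c, rfl⟩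
    obtain rfl | rfl : c = 0 ∨ c = 1 := by revert c; decide
    · simp
    · simp [add_comm]
  · rintro (rfl | rfl)
    exacts [⟨0, by simp⟩, ⟨1, by simp [add_comm]⟩]

namespace CongMod

variable {V : Type*} [AddCommGroup V] [Module (ZMod 2) V] {ρ : V} {A B : Multiset V}

theorem symm (h : CongMod ρ A B) : CongMod ρ B A := Eq.symm h

variable [DecidableEq V]

theorem count_add_count_eq (h : CongMod ρ A B) (hρ : ρ ≠ 0) (v : V) :
    A.count v + A.count (v + ρ) = B.count v + B.count (v + ρ) := by
  classical
  have hv : v ≠ v + ρ := fun hv => hρ (left_eq_add.mp hv)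
  have key := congrArg (Multiset.count ((Submodule.span (ZMod 2) {ρ}).mkQ v)) h
  simpa only [Multiset.count_map_eq_count_add_count hv
    fun _ => Submodule.mkQ_span_singleton_eq_iff] using key

theorem add_mem_sub (h : CongMod ρ A B) (hρ : ρ ≠ 0) {x : V} (hx : x ∈ A - B) :
    x + ρ ∈ B - A := by
  have key := h.count_add_count_eq hρ (x + ρ)
  rw [add_assoc, ZModModule.add_self, add_zero] at key
  rw [Multiset.mem_sub] at hx ⊢
  omega

end CongMod

section FourVertex

variable {V : Type*} [AddCommGroup V] [Module (ZMod 2) V] [DecidableEq V]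

/-- `P, Q, R` are the vertex multisets of `p, q, r`; `X, Y, Z` label the edges `pq, pr, qr`,
`Z'` the third edge at `p`, and `X', Y'` the edges opposite to `pq, pr`. -/
theorem add_mem_sub_of_congMod {P Q R W X Y Z X' Y' Z' : Multiset V} {x y : V}
    (hP : P = W + X + Y + Z') (hQ : Q = W + X + Z + Y') (hR : R = W + Y + Z + X')
    (hx0 : x ≠ 0) (hy0 : y ≠ 0) (hxc : CongMod x P Q) (hyc : CongMod y P R)
    (hXZ : Disjoint X Z) (hYZ : Disjoint Y Z) (hX'Y' : Disjoint X' Y')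
    (hx : x ∈ X - X') (hy : y ∈ Y - Y') : x + y ∈ Z - Z' := by
  have hxZ : Z.count x = 0 := Multiset.count_eq_zero.2 <|
    Multiset.disjoint_left.1 hXZ (Multiset.mem_of_le (Multiset.sub_le_self _ _) hx)
  have hyZ : Z.count y = 0 := Multiset.count_eq_zero.2 <|
    Multiset.disjoint_left.1 hYZ (Multiset.mem_of_le (Multiset.sub_le_self _ _) hy)
  have hxPR : x ∈ P - R := by
    rw [Multiset.mem_sub] at hx ⊢
    simp only [hP, hR, Multiset.count_add]
    omega
  have hyPQ : y ∈ P - Q := by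
    rw [Multiset.mem_sub] at hy ⊢
    simp only [hP, hQ, Multiset.count_add]
    omega
  have hxyR : x + y ∈ R - P := hyc.add_mem_sub hy0 hxPR
  have hxyQ : x + y ∈ Q - P := add_comm y x ▸ hxc.add_mem_sub hx0 hyPQ
  have hinter : (X' ∩ Y').count (x + y) = 0 := by
    rw [Multiset.inter_eq_zero_iff_disjoint.2 hX'Y', Multiset.count_zero]
  rw [Multiset.mem_sub] at hxyR hxyQ ⊢
  simp only [hP, hQ, hR, Multiset.count_add, Multiset.count_inter] at hxyR hxyQ hinter
  omega

/-- `X, Y, U` label the edges from `P` to `Q, R, S`, and `X', Y', U'` the opposite edges. -/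
theorem add_mem_sub_opposite_of_congMod {P Q R S W X Y U X' Y' U' : Multiset V}
    (hP : P = W + X + Y + U) (hQ : Q = W + X + U' + Y') (hR : R = W + U' + Y + X')
    (hS : S = W + U + Y' + X')
    (hX0 : ∀ x ∈ X, x ≠ 0) (hY0 : ∀ y ∈ Y, y ≠ 0) (hU0 : ∀ u ∈ U, u ≠ 0)
    (hXc : ∀ x ∈ X, CongMod x P Q) (hYc : ∀ y ∈ Y, CongMod y P R)
    (hUc : ∀ u ∈ U, CongMod u P S)
    (hXY' : Disjoint X Y') (hXU' : Disjoint X U') (hYX' : Disjoint Y X')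
    (hYU' : Disjoint Y U') (hUX' : Disjoint U X') (hUY' : Disjoint U Y')
    (hX'Y' : Disjoint X' Y') (hX'U' : Disjoint X' U') (hY'U' : Disjoint Y' U')
    {x y u : V} (hx : x ∈ X - X') (hy : y ∈ Y - Y') (hu : u ∈ U - U') :
    x + y ∈ U' - U ∧ x + u ∈ Y' - Y ∧ y + u ∈ X' - X := by
  have hxX : x ∈ X := Multiset.mem_of_le (Multiset.sub_le_self _ _) hx
  have hyY : y ∈ Y := Multiset.mem_of_le (Multiset.sub_le_self _ _) hy
  have huU : u ∈ U := Multiset.mem_of_le (Multiset.sub_le_self _ _) hu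
  subst hP hQ hR hS
  refine ⟨?_, ?_, ?_⟩
  · exact add_mem_sub_of_congMod (W := W) rfl rfl (by abel) (hX0 x hxX) (hY0 y hyY)
      (hXc x hxX) (hYc y hyY) hXU' hYU' hX'Y' hx hy
  · exact add_mem_sub_of_congMod (W := W) (by abel) (by abel) rfl (hX0 x hxX) (hU0 u huU)
      (hXc x hxX) (hUc u huU) hXY' hUY' hX'U' hx hu
  · exact add_mem_sub_of_congMod (W := W) (by abel) (by abel) (by abel) (hY0 y hyY)
      (hU0 u huU) (hYc y hyY) (hUc u huU) hYX' hUX' hY'U' hy hu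

end FourVertex

/- Four-vertex hypotheses: `W, B, C, D, E, H, L` model `ω̂, β̂, γ̂, δ̂, ε̂, η̂, λ̂`. -/
theorem four_fixed_points_sum_relations
    {V : Type*} [AddCommGroup V] [Module (ZMod 2) V]
    [DecidableEq V]
    (W B C D E H L : Multiset V)
    (hB0 : ∀ v ∈ B, v ≠ (0 : V)) (hC0 : ∀ v ∈ C, v ≠ (0 : V))
    (hD0 : ∀ v ∈ D, v ≠ (0 : V)) (hE0 : ∀ v ∈ E, v ≠ (0 : V)) (hH0 : ∀ v ∈ H, v ≠ (0 : V))
    (hL0 : ∀ v ∈ L, v ≠ (0 : V))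
    (Ap Aq Ar As : Multiset V)
    (hAp : Ap = W + B + C + D) (hAq : Aq = W + B + E + H)
    (hAr : Ar = W + E + C + L) (hAs : As = W + D + H + L)
    (hBC : ∀ v, v ∈ B → v ∈ C → False) (hBD : ∀ v, v ∈ B → v ∈ D → False)
    (hBE : ∀ v, v ∈ B → v ∈ E → False) (hBH : ∀ v, v ∈ B → v ∈ H → False)
    (hCD : ∀ v, v ∈ C → v ∈ D → False) (hCE : ∀ v, v ∈ C → v ∈ E → False)
    (hCL : ∀ v, v ∈ C → v ∈ L → False)
    (hDH : ∀ v, v ∈ D → v ∈ H → False) (hDL : ∀ v, v ∈ D → v ∈ L → False)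
    (hEH : ∀ v, v ∈ E → v ∈ H → False) (hEL : ∀ v, v ∈ E → v ∈ L → False)
    (hHL : ∀ v, v ∈ H → v ∈ L → False)
    (hP2B : ∀ β ∈ B, CongMod β Ap Aq)
    (hP2C : ∀ γ ∈ C, CongMod γ Ap Ar)
    (hP2D : ∀ δ ∈ D, CongMod δ Ap As)
    (hP2E : ∀ ε ∈ E, CongMod ε Aq Ar)
    (hP2H : ∀ η ∈ H, CongMod η Aq As)
    (hP2L : ∀ lam ∈ L, CongMod lam Ar As)
    (B0 B1 L1 C0 C1 H1 D0 D1 E1 : Multiset V)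
    (hB0def : B0 = B ∩ L) (hB1def : B1 = B - B0) (hL1def : L1 = L - B0)
    (hC0def : C0 = C ∩ H) (hC1def : C1 = C - C0) (hH1def : H1 = H - C0)
    (hD0def : D0 = D ∩ E) (hD1def : D1 = D - D0) (hE1def : E1 = E - D0)
    :
    ∀ β ∈ B1, ∀ γ ∈ C1, ∀ δ ∈ D1, ∀ ε ∈ E1, ∀ η ∈ H1, ∀ lam ∈ L1,
      β + γ ∈ E1 ∧ β + δ ∈ H1 ∧ β + η ∈ D1 ∧ β + ε ∈ C1 ∧
      γ + δ ∈ L1 ∧ γ + ε ∈ B1 ∧ γ + lam ∈ D1 ∧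
      δ + η ∈ B1 ∧ δ + lam ∈ C1 ∧
      ε + η ∈ L1 ∧ ε + lam ∈ H1 ∧ η + lam ∈ E1 := by
  subst hB0def hC0def hD0def
  rw [Multiset.sub_inter] at hB1def hC1def hD1def
  rw [Multiset.inter_comm, Multiset.sub_inter] at hL1def hH1def hE1def
  subst_vars
  intro β hβ γ hγ δ hδ ε hε η hη lam hlam
  have disj {X Y : Multiset V} (h : ∀ v, v ∈ X → v ∈ Y → False) : Disjoint X Y :=
    Multiset.disjoint_left.2 (h _ ·)
  obtain ⟨hβγ, hβδ, hγδ⟩ := add_mem_sub_opposite_of_congMod (W := W)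
    (by abel) (by abel) (by abel) (by abel) hB0 hC0 hD0 hP2B hP2C hP2D
    (disj hBH) (disj hBE) (disj hCL) (disj hCE) (disj hDL) (disj hDH)
    (disj hHL).symm (disj hEL).symm (disj hEH).symm hβ hγ hδ
  obtain ⟨hβε, hβη, hεη⟩ := add_mem_sub_opposite_of_congMod (W := W)
    (by abel) (by abel) (by abel) (by abel) hB0 hE0 hH0 (fun v hv => (hP2B v hv).symm) hP2E hP2H
    (disj hBD) (disj hBC) (disj hEL) (disj hCE).symm (disj hHL) (disj hDH).symm
    (disj hDL).symm (disj hCL).symm (disj hCD).symm hβ hε hη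
  obtain ⟨hγε, hγlam, hεlam⟩ := add_mem_sub_opposite_of_congMod (W := W)
    (by abel) (by abel) (by abel) (by abel) hC0 hE0 hL0 (fun v hv => (hP2C v hv).symm)
    (fun v hv => (hP2E v hv).symm) hP2L
    (disj hCD) (disj hBC).symm (disj hEH) (disj hBE).symm (disj hHL).symm (disj hDL).symm
    (disj hDH).symm (disj hBH).symm (disj hBD).symm hγ hε hlam
  obtain ⟨hδη, hδlam, hηlam⟩ := add_mem_sub_opposite_of_congMod (W := W)
    (by abel) (by abel) (by abel) (by abel) hD0 hH0 hL0 (fun v hv => (hP2D v hv).symm)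
    (fun v hv => (hP2H v hv).symm) (fun v hv => (hP2L v hv).symm)
    (disj hCD).symm (disj hBD).symm (disj hEH).symm (disj hBH).symm (disj hEL).symm
    (disj hCL).symm (disj hCE).symm (disj hBE).symm (disj hBC).symm hδ hη hlam
  exact ⟨hβγ, hβδ, hβη, hβε, hγδ, hγε, hγlam, hδη, hδlam, hεη, hεlam, hηlam⟩
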